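/- On a weak almost para-S-manifold, the tensor N^{(3)}_i = £_{ξ_i} f vanishes if and only if ξ_i is a Killing vector field; more precisely, (£_{ξ_i} dη^j)(X,Y) = (£_{ξ_i} g)(X, fY) + g(X, (£_{ξ_i} f)Y) and £_{ξ_i} dη^j = 0. -/

import Mathlib

open scoped BigOperators

noncomputable section

variable (C V : Type*) [CommRing C] [Algebra ℝ C] [AddCommGroup V]
  [Module ℝ V] [Module C V] [IsScalarTower ℝ C V]

/-- A metric weak para-f-structure on a manifold, modelled algebraically:
`C` plays the role of the ring of smooth functions, `V` the `C`-module of vector fields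
with Lie bracket `b` and derivation action `act` of vector fields on functions,
`g` is a compatible pseudo-Riemannian metric (with `f` of rank `2n`, encoded by `hrank`)
and `nabla` its Levi-Civita connection (torsion-free and metric). -/
structure MWPF (p : ℕ) where
  f : V →ₗ[C] V
  Q : V →ₗ[C] V
  ξ : Fin p → V
  η : Fin p → V →ₗ[C] C
  g : V →ₗ[C] V →ₗ[C] C
  b : V → V → V
  act : V → C → C
  nabla : V → V → V
  hQbij : Function.Bijective Q
  hf2 : ∀ X, f (f X) = Q X - ∑ i, η i X • ξ i
  hf3 : ∀ X, f (f (f X)) = f (Q X)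
  hetaxi : ∀ i j, η i (ξ j) = if i = j then (1 : C) else 0
  hQxi : ∀ i, Q (ξ i) = ξ i
  hrange : ∀ X : V, X ∈ LinearMap.range f ↔ ∀ i, η i X = 0
  hgsymm : ∀ X Y, g X Y = g Y X
  hgnondeg : ∀ X, (∀ Y, g X Y = 0) → X = 0
  hrank : ∀ Z, (∀ i, η i Z = 0) → (∀ Y, g Z (f Y) = 0) → Z = 0
  hgcompat : ∀ X Y, g (f X) (f Y) = -(g X (Q Y)) + ∑ i, η i X * η i Y
  hbskew : ∀ X Y, b X Y = - b Y X
  hbaddl : ∀ X Y Z, b (X + Y) Z = b X Z + b Y Z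
  hjacobi : ∀ X Y Z, b X (b Y Z) + b Y (b Z X) + b Z (b X Y) = 0
  hactadd : ∀ X a c, act X (a + c) = act X a + act X c
  hactmul : ∀ X a c, act X (a * c) = act X a * c + a * act X c
  hactX : ∀ (a : C) X Y c, act (a • X + Y) c = a * act X c + act Y c
  hbleib : ∀ X (a : C) Y, b X (a • Y) = act X a • Y + a • b X Y
  hnab1 : ∀ (a : C) X X' Y, nabla (a • X + X') Y = a • nabla X Y + nabla X' Y
  hnabadd : ∀ X Y Z, nabla X (Y + Z) = nabla X Y + nabla X Z
  hnableib : ∀ X (a : C) Y, nabla X (a • Y) = act X a • Y + a • nabla X Y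
  htors : ∀ X Y, nabla X Y - nabla Y X = b X Y
  hmetric : ∀ X Y Z, act X (g Y Z) = g (nabla X Y) Z + g Y (nabla X Z)

namespace MWPF

variable {C V} {p : ℕ} (s : MWPF C V p)

/-- The fundamental 2-form `Φ(X,Y) = g(X, fY)`. -/
def Phi (X Y : V) : C := s.g X (s.f Y)

/-- `dη^i(X,Y) = (1/2)(X(η^i Y) - Y(η^i X) - η^i [X,Y])`. -/
def dEta (i : Fin p) (X Y : V) : C :=
  (2⁻¹ : ℝ) • (s.act X (s.η i Y) - s.act Y (s.η i X) - s.η i (s.b X Y))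

/-- The Nijenhuis torsion `[f,f]`. -/
def Nij (X Y : V) : V :=
  s.f (s.f (s.b X Y)) + s.b (s.f X) (s.f Y) - s.f (s.b (s.f X) Y) - s.f (s.b X (s.f Y))

/-- `N^(1)(X,Y) = [f,f](X,Y) - 2 Σ_i dη^i(X,Y) ξ_i`. -/
def N1 (X Y : V) : V := s.Nij X Y - (2 : ℝ) • ∑ i, s.dEta i X Y • s.ξ i

/-- The difference tensor `Q̃ = Q - id`. -/
def Qt (X : V) : V := s.Q X - X

/-- The Lie derivative of `f`: `(£_Z f)X = [Z, fX] - f[Z,X]`. -/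
def Lief (Z X : V) : V := s.b Z (s.f X) - s.f (s.b Z X)

/-- The Lie derivative of `g`: `(£_Z g)(X,Y) = Z(g(X,Y)) - g([Z,X],Y) - g(X,[Z,Y])`. -/
def Lieg (Z X Y : V) : C := s.act Z (s.g X Y) - s.g (s.b Z X) Y - s.g X (s.b Z Y)

/-- `N^(2)_i(X,Y) = (£_{fX} η^i)Y - (£_{fY} η^i)X`. -/
def N2 (i : Fin p) (X Y : V) : C :=
  (s.act (s.f X) (s.η i Y) - s.η i (s.b (s.f X) Y))
    - (s.act (s.f Y) (s.η i X) - s.η i (s.b (s.f Y) X))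

/-- The exterior differential of the fundamental 2-form. -/
def dPhi (X Y Z : V) : C := (3⁻¹ : ℝ) •
  (s.act X (s.Phi Y Z) + s.act Y (s.Phi Z X) + s.act Z (s.Phi X Y)
    - s.Phi (s.b X Y) Z - s.Phi (s.b Z X) Y - s.Phi (s.b Y Z) X)

/-- The tensor `h_i = (1/2) £_{ξ_i} f`. -/
def hmap (i : Fin p) (X : V) : V := (2⁻¹ : ℝ) • s.Lief (s.ξ i) X

/-- The tensor `N^(5)`. -/
def N5 (X Y Z : V) : C :=
  s.act (s.f Z) (s.g X (s.Qt Y)) - s.act (s.f Y) (s.g X (s.Qt Z))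
    + s.g (s.b X (s.f Z)) (s.Qt Y) - s.g (s.b X (s.f Y)) (s.Qt Z)
    + s.g (s.b Y (s.f Z) - s.b Z (s.f Y) - s.f (s.b Y Z)) (s.Qt X)

/-- The curvature tensor of `nabla`. -/
def Rm (X Y Z : V) : V :=
  s.nabla X (s.nabla Y Z) - s.nabla Y (s.nabla X Z) - s.nabla (s.b X Y) Z

end MWPF

/-!
With `dη^j = Φ = g(·, f·)`, the first identity is the Leibniz rule for `£_{ξ_i}` applied to
`g(X, fY)`. Since `Φ(ξ_i, ·) = η^i ∘ f = 0`, the formula for `dη^j(ξ_i, ·)` gives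
`£_{ξ_i} η^j = 0`, hence `£_{ξ_i} dη^j = 0` (Cartan's formula, checked here through the Jacobi
identity). So `(£_{ξ_i} g)(X, fY) = -g(X, (£_{ξ_i} f)Y)`. If `ξ_i` is Killing, nondegeneracy of
`g` gives `£_{ξ_i} f = 0`. Conversely, if `£_{ξ_i} f = 0` then `[ξ_i, ξ_k]` is killed by `f` and
by every `η^m`, so it vanishes and `(£_{ξ_i} g)(X, ξ_k) = 0`; as every vector field is
`f(fU) + ∑ η^m(U) ξ_m`, `£_{ξ_i} g = 0`.
-/

namespace MWPF

section
variable {C V : Type*} [CommRing C] [AddCommGroup V] [Module C V] {p : ℕ} (s : MWPF C V p)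

lemma act_zero (X : V) : s.act X 0 = 0 := by
  simpa using s.hactadd X 0 0

lemma act_one (X : V) : s.act X 1 = 0 := by
  simpa using s.hactmul X 1 1

lemma act_sub (X : V) (a c : C) : s.act X (a - c) = s.act X a - s.act X c := by
  rw [eq_sub_iff_add_eq, ← s.hactadd, sub_add_cancel]

lemma b_zero (X : V) : s.b X 0 = 0 := by
  simpa using s.hbleib X 0 0

lemma b_add (X Y Z : V) : s.b X (Y + Z) = s.b X Y + s.b X Z := by
  rw [s.hbskew, s.hbaddl, s.hbskew Y, s.hbskew Z, neg_add, neg_neg, neg_neg]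

lemma b_neg (X Y : V) : s.b X (-Y) = -s.b X Y := by
  have h := s.b_add X Y (-Y)
  rw [add_neg_cancel, s.b_zero] at h
  exact (neg_eq_of_add_eq_zero_right h.symm).symm

lemma b_leibniz (X Y Z : V) : s.b X (s.b Y Z) = s.b (s.b X Y) Z + s.b Y (s.b X Z) := by
  have h := s.hjacobi X Y Z
  rw [s.hbskew Z X, s.b_neg, s.hbskew Z] at h
  rw [← sub_eq_zero, ← h]
  abel

lemma act_eta_xi (X : V) (m k : Fin p) : s.act X (s.η m (s.ξ k)) = 0 := by
  rw [s.hetaxi]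
  split_ifs
  exacts [s.act_one X, s.act_zero X]

lemma act_b (i : Fin p) (X Y : V) (c : C) :
    s.act (s.b X Y) c = s.act X (s.act Y c) - s.act Y (s.act X c) := by
  -- Jacobi applied to `X, Y, c • ξ_i`, read off through `η^i`.
  have h := s.b_leibniz X Y (c • s.ξ i)
  simp only [s.hbleib, s.b_add, s.b_leibniz X Y (s.ξ i), smul_add] at h
  have hξ : (s.act X (s.act Y c) - s.act Y (s.act X c) - s.act (s.b X Y) c) • s.ξ i = 0 := by
    rw [sub_smul, sub_smul]
    linear_combination (norm := abel) h
  have := congrArg (s.η i) hξ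
  rw [map_smul, map_zero, s.hetaxi, if_pos rfl, smul_eq_mul, mul_one] at this
  exact (sub_eq_zero.mp this).symm

lemma Q_eq (U : V) : s.Q U = s.f (s.f U) + ∑ m, s.η m U • s.ξ m := by
  rw [s.hf2, sub_add_cancel]

lemma eta_f (k : Fin p) (X : V) : s.η k (s.f X) = 0 :=
  (s.hrange (s.f X)).mp ⟨X, rfl⟩ k

lemma f_xi (i : Fin p) : s.f (s.ξ i) = 0 := by
  have hff : s.f (s.f (s.ξ i)) = 0 := by
    simp [s.hf2, s.hQxi, s.hetaxi]
  have h := s.hf3 (s.ξ i)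
  rw [hff, map_zero, s.hQxi] at h
  exact h.symm

lemma Q_f (X : V) : s.Q (s.f X) = s.f (s.Q X) := by
  simp [s.Q_eq (s.f X), s.eta_f, s.hf3]

lemma eta_Q (k : Fin p) (U : V) : s.η k (s.Q U) = s.η k U := by
  simp [s.Q_eq U, s.eta_f, s.hetaxi]

lemma g_xi (k : Fin p) (W : V) : s.g (s.ξ k) W = s.η k W := by
  obtain ⟨U, rfl⟩ := s.hQbij.2 W
  have h := s.hgcompat (s.ξ k) U
  simp [s.f_xi, s.hetaxi] at h
  rw [s.eta_Q]
  linear_combination h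

lemma eq_zero_of_f_eq_zero {W : V} (hf : s.f W = 0) (hη : ∀ m, s.η m W = 0) : W = 0 := by
  obtain ⟨U, rfl⟩ := (s.hrange W).mpr hη
  apply s.hQbij.1
  simp [s.Q_f, s.Q_eq U, hf, s.f_xi]

/-- `(£_Z F)(X, Y)` for a function `F` of two vector fields. -/
def lieDeriv₂ (Z : V) (F : V → V → C) (X Y : V) : C :=
  s.act Z (F X Y) - F (s.b Z X) Y - F X (s.b Z Y)

lemma lieDeriv₂_add (Z : V) (F G : V → V → C) (X Y : V) :
    s.lieDeriv₂ Z (F + G) X Y = s.lieDeriv₂ Z F X Y + s.lieDeriv₂ Z G X Y := by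
  simp only [lieDeriv₂, Pi.add_apply, s.hactadd]
  ring

lemma lieDeriv₂_Phi (Z X Y : V) :
    s.lieDeriv₂ Z s.Phi X Y = s.Lieg Z X (s.f Y) + s.g X (s.Lief Z Y) := by
  simp only [lieDeriv₂, Phi, Lieg, Lief, map_sub]
  ring

/-- `2 dη^j` is kept without the factor `2⁻¹`: `act` is not known to commute with real scalars. -/
lemma lieDeriv₂_two_dEta_eq_zero (j : Fin p) {Z : V}
    (hZ : ∀ W, s.act Z (s.η j W) = s.η j (s.b Z W)) (X Y : V) :
    s.lieDeriv₂ Z (fun U W => s.act U (s.η j W) - s.act W (s.η j U) - s.η j (s.b U W)) X Y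
      = 0 := by
  have hjac : s.act Z (s.η j (s.b X Y)) = s.η j (s.b (s.b Z X) Y) + s.η j (s.b X (s.b Z Y)) := by
    rw [hZ, s.b_leibniz, map_add]
  simp only [lieDeriv₂, s.act_sub, hjac, ← hZ, s.act_b j]
  ring

def liegRight (Z X : V) : V →ₗ[C] C where
  toFun := s.Lieg Z X
  map_add' U W := by
    simp only [Lieg, s.b_add, map_add, s.hactadd]
    ring
  map_smul' a W := by
    simp only [Lieg, s.hbleib, map_add, map_smul, s.hactmul, smul_eq_mul, RingHom.id_apply]
    ring

lemma b_xi_eq_zero {Z : V} (hZ : ∀ m W, s.act Z (s.η m W) = s.η m (s.b Z W)) {k : Fin p}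
    (hf : s.Lief Z (s.ξ k) = 0) : s.b Z (s.ξ k) = 0 := by
  refine s.eq_zero_of_f_eq_zero ?_ fun m => ?_
  · rw [Lief, s.f_xi, s.b_zero, zero_sub, neg_eq_zero] at hf
    exact hf
  · rw [← hZ, s.act_eta_xi]

lemma lieg_xi_eq_zero {Z : V} (hZ : ∀ m W, s.act Z (s.η m W) = s.η m (s.b Z W)) {k : Fin p}
    (hb : s.b Z (s.ξ k) = 0) (X : V) : s.Lieg Z X (s.ξ k) = 0 := by
  rw [Lieg, hb, map_zero, s.hgsymm, s.g_xi, s.hgsymm, s.g_xi, hZ, sub_self, zero_sub,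
    neg_zero]

lemma lief_eq_zero_iff_lieg_eq_zero {Z : V}
    (hZ : ∀ m W, s.act Z (s.η m W) = s.η m (s.b Z W))
    (hΦ : ∀ X Y, s.lieDeriv₂ Z s.Phi X Y = 0) :
    (∀ X, s.Lief Z X = 0) ↔ ∀ X Y, s.Lieg Z X Y = 0 := by
  simp only [lieDeriv₂_Phi] at hΦ
  constructor
  · intro hf X Y
    obtain ⟨U, rfl⟩ := s.hQbij.2 Y
    have hfY : ∀ W, s.Lieg Z X (s.f W) = 0 := fun W => by simpa [hf W] using hΦ X W
    have hξ : ∀ k, s.Lieg Z X (s.ξ k) = 0 := fun k =>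
      s.lieg_xi_eq_zero hZ (s.b_xi_eq_zero hZ (hf _)) X
    change s.liegRight Z X (s.Q U) = 0
    simp only [s.Q_eq U, map_add, map_sum, map_smul]
    simp [liegRight, hfY, hξ]
  · intro hK Y
    refine s.hgnondeg _ fun X => ?_
    simpa [hK, s.hgsymm X] using hΦ X Y

end

section
variable {C V : Type*} [CommRing C] [Algebra ℝ C] [AddCommGroup V] [Module C V] {p : ℕ}
  (s : MWPF C V p)

lemma dEta_add_self (j : Fin p) :
    s.dEta j + s.dEta j = fun U W => s.act U (s.η j W) - s.act W (s.η j U) - s.η j (s.b U W) := by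
  ext U W
  simp only [Pi.add_apply, dEta, ← two_smul ℝ, smul_smul]
  norm_num

lemma lieDeriv₂_dEta_eq_zero (j : Fin p) {Z : V}
    (hZ : ∀ W, s.act Z (s.η j W) = s.η j (s.b Z W)) (X Y : V) :
    s.lieDeriv₂ Z (s.dEta j) X Y = 0 := by
  have h : (2 : ℝ) • s.lieDeriv₂ Z (s.dEta j) X Y = 0 := by
    rw [two_smul, ← lieDeriv₂_add, dEta_add_self]
    exact s.lieDeriv₂_two_dEta_eq_zero j hZ X Y
  exact (smul_eq_zero.mp h).resolve_left two_ne_zero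

-- `2 dη^j(ξ_i, W) = 2 Φ(ξ_i, W) = 2 η^i(f W) = 0`, and `η^j(ξ_i)` is constant.
lemma act_xi_eta {j : Fin p} (hS : ∀ X Y, s.dEta j X Y = s.Phi X Y) (i : Fin p) (W : V) :
    s.act (s.ξ i) (s.η j W) = s.η j (s.b (s.ξ i) W) := by
  have h := hS (s.ξ i) W
  rw [dEta, Phi, s.g_xi, s.eta_f, s.act_eta_xi, sub_zero, smul_eq_zero] at h
  exact sub_eq_zero.mp (h.resolve_left (by norm_num))

end

end MWPF

theorem paraS_N3_iff_Killing_general {C V : Type*} [CommRing C] [Algebra ℝ C] [AddCommGroup V]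
    [Module C V] {p : ℕ} (s : MWPF C V p)
    (hS : ∀ (i : Fin p) (X Y : V), s.dEta i X Y = s.Phi X Y) :
    (∀ (i j : Fin p) (X Y : V),
      s.act (s.ξ i) (s.dEta j X Y) - s.dEta j (s.b (s.ξ i) X) Y
        - s.dEta j X (s.b (s.ξ i) Y)
      = s.Lieg (s.ξ i) X (s.f Y) + s.g X (s.Lief (s.ξ i) Y)) ∧
    (∀ (i j : Fin p) (X Y : V),
      s.act (s.ξ i) (s.dEta j X Y) - s.dEta j (s.b (s.ξ i) X) Y
        - s.dEta j X (s.b (s.ξ i) Y) = 0) ∧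
    (∀ i : Fin p, (∀ X, s.Lief (s.ξ i) X = 0) ↔ (∀ X Y, s.Lieg (s.ξ i) X Y = 0)) := by
  have hΦ : ∀ j, s.dEta j = s.Phi := fun j => funext₂ (hS j)
  have hη : ∀ i j W, s.act (s.ξ i) (s.η j W) = s.η j (s.b (s.ξ i) W) :=
    fun i j => s.act_xi_eta (hS j) i
  have hLie : ∀ i j X Y, s.lieDeriv₂ (s.ξ i) (s.dEta j) X Y = 0 :=
    fun i j => s.lieDeriv₂_dEta_eq_zero j (hη i j)
  refine ⟨fun i j X Y => ?_, hLie, fun i => ?_⟩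
  · change s.lieDeriv₂ _ (s.dEta j) X Y = _
    rw [hΦ]
    exact s.lieDeriv₂_Phi _ X Y
  · refine s.lief_eq_zero_iff_lieg_eq_zero (hη i) fun X Y => ?_
    rw [← hΦ i]
    exact hLie i i X Y

/-- on a weak almost para-S-manifold,
`(£_{ξ_i} dη^j)(X,Y) = (£_{ξ_i} g)(X, fY) + g(X, (£_{ξ_i} f)Y)`, `£_{ξ_i} dη^j = 0`,
and `N^(3)_i = £_{ξ_i} f = 0` if and only if `ξ_i` is a Killing vector field. -/
theorem paraS_N3_iff_Killing {C V : Type*} [CommRing C] [Algebra ℝ C] [AddCommGroup V]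
    [Module ℝ V] [Module C V] [IsScalarTower ℝ C V] {p : ℕ} (s : MWPF C V p)
    (hS : ∀ (i : Fin p) (X Y : V), s.dEta i X Y = s.Phi X Y) :
    (∀ (i j : Fin p) (X Y : V),
      s.act (s.ξ i) (s.dEta j X Y) - s.dEta j (s.b (s.ξ i) X) Y
        - s.dEta j X (s.b (s.ξ i) Y)
      = s.Lieg (s.ξ i) X (s.f Y) + s.g X (s.Lief (s.ξ i) Y)) ∧
    (∀ (i j : Fin p) (X Y : V),
      s.act (s.ξ i) (s.dEta j X Y) - s.dEta j (s.b (s.ξ i) X) Y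
        - s.dEta j X (s.b (s.ξ i) Y) = 0) ∧
    (∀ i : Fin p, (∀ X, s.Lief (s.ξ i) X = 0) ↔ (∀ X Y, s.Lieg (s.ξ i) X Y = 0)) :=
  paraS_N3_iff_Killing_general s hS
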